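/- arXiv:2305.07755 — 2 statements merged into one kernel-verified Lean document; each statement's English description precedes it below -/
import Mathlib

section
/- Let J be a real m×n matrix, L a real p×n matrix with N(J) ∩ N(L) = {0}, λ > 0, and F ∈ ℝᵐ. If d solves (JᵀJ + λLᵀL)d = −JᵀF, then ‖Jd‖ ≤ ‖F‖; more generally, the matrix J(JᵀJ + λLᵀL)⁻¹Jᵀ has spectral norm at most 1, i.e. ‖J(JᵀJ + λLᵀL)⁻¹Jᵀ w‖ ≤ ‖w‖ for all w ∈ ℝᵐ. -/
open Matrix
open scoped RealInnerProductSpace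

/-- The continuous linear map on Euclidean spaces induced by a real matrix. -/
noncomputable def matCLM {m n : ℕ} (A : Matrix (Fin m) (Fin n) ℝ) :
    EuclideanSpace ℝ (Fin n) →L[ℝ] EuclideanSpace ℝ (Fin m) :=
  LinearMap.toContinuousLinearMap (Matrix.toEuclideanLin A)

lemma matCLM_mul {m n k : ℕ} (A : Matrix (Fin m) (Fin n) ℝ) (B : Matrix (Fin n) (Fin k) ℝ)
    (x : EuclideanSpace ℝ (Fin k)) : matCLM (A * B) x = matCLM A (matCLM B x) := by
  simp [matCLM, Matrix.toEuclideanLin_apply, Matrix.mulVec_mulVec]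

lemma matCLM_adj {m n : ℕ} (A : Matrix (Fin m) (Fin n) ℝ)
    (x : EuclideanSpace ℝ (Fin m)) (y : EuclideanSpace ℝ (Fin n)) :
    (inner ℝ (matCLM Aᵀ x) y : ℝ) = inner ℝ x (matCLM A y) := by
  have h : Aᵀ = Aᴴ := by ext i j; simp [Matrix.conjTranspose_apply]
  rw [h]
  simp only [matCLM, LinearMap.coe_toContinuousLinearMap',
    Matrix.toEuclideanLin_conjTranspose_eq_adjoint]
  exact LinearMap.adjoint_inner_left _ _ _

lemma matCLM_zero_iff {m n : ℕ} (A : Matrix (Fin m) (Fin n) ℝ) (x : EuclideanSpace ℝ (Fin n)) :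
    matCLM A x = 0 ↔ A *ᵥ (WithLp.equiv 2 _ x) = 0 := by
  rw [matCLM]
  constructor
  · intro h; have := congrArg (WithLp.equiv 2 (Fin m → ℝ)) h
    simpa [Matrix.toEuclideanLin_apply] using this
  · intro h
    simp only [LinearMap.coe_toContinuousLinearMap', Matrix.toEuclideanLin_apply, h]
    rw [show A *ᵥ x.ofLp = 0 from h]; simp

lemma matCLM_addsmul {m n p : ℕ} (J : Matrix (Fin m) (Fin n) ℝ) (L : Matrix (Fin p) (Fin n) ℝ)
    (lam : ℝ) (d : EuclideanSpace ℝ (Fin n)) :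
    matCLM (Jᵀ * J + lam • (Lᵀ * L)) d
      = matCLM (Jᵀ * J) d + lam • matCLM (Lᵀ * L) d := by
  simp [matCLM, map_add, _root_.map_smul]

lemma key_ineq {m n p : ℕ} (J : Matrix (Fin m) (Fin n) ℝ) (L : Matrix (Fin p) (Fin n) ℝ)
    (lam : ℝ) (hlam : 0 < lam) (d : EuclideanSpace ℝ (Fin n)) (w : EuclideanSpace ℝ (Fin m))
    (h : matCLM (Jᵀ * J + lam • (Lᵀ * L)) d = matCLM Jᵀ w) :
    ‖matCLM J d‖ ≤ ‖w‖ := by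
  have hJ : (inner ℝ d (matCLM (Jᵀ * J) d) : ℝ) = ‖matCLM J d‖ ^ 2 := by
    rw [matCLM_mul, real_inner_comm, matCLM_adj, real_inner_self_eq_norm_sq]
  have hL : (inner ℝ d (matCLM (Lᵀ * L) d) : ℝ) = ‖matCLM L d‖ ^ 2 := by
    rw [matCLM_mul, real_inner_comm, matCLM_adj, real_inner_self_eq_norm_sq]
  have hq : (inner ℝ d (matCLM (Jᵀ * J + lam • (Lᵀ * L)) d) : ℝ)
      = ‖matCLM J d‖ ^ 2 + lam * ‖matCLM L d‖ ^ 2 := by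
    rw [matCLM_addsmul, inner_add_right, hJ, real_inner_smul_right, hL]
  have hw : (inner ℝ d (matCLM Jᵀ w) : ℝ) = inner ℝ (matCLM J d) w := by
    rw [real_inner_comm, matCLM_adj, real_inner_comm]
  have h1 : ‖matCLM J d‖ ^ 2 ≤ (inner ℝ (matCLM J d) w : ℝ) := by
    rw [← hw, ← h, hq]
    nlinarith [sq_nonneg ‖matCLM L d‖]
  have h2 : (inner ℝ (matCLM J d) w : ℝ) ≤ ‖matCLM J d‖ * ‖w‖ := real_inner_le_norm _ _
  rcases eq_or_lt_of_le (norm_nonneg (matCLM J d)) with h0 | h0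
  · rw [← h0]; exact norm_nonneg w
  · nlinarith

lemma key_posdef {m n p : ℕ} (J : Matrix (Fin m) (Fin n) ℝ) (L : Matrix (Fin p) (Fin n) ℝ)
    (hker : {v : EuclideanSpace ℝ (Fin n) | matCLM J v = 0} ∩
        {v : EuclideanSpace ℝ (Fin n) | matCLM L v = 0} = {0})
    (lam : ℝ) (hlam : 0 < lam) (d : EuclideanSpace ℝ (Fin n))
    (h : matCLM (Jᵀ * J + lam • (Lᵀ * L)) d = 0) : d = 0 := by
  have hJ : (inner ℝ d (matCLM (Jᵀ * J) d) : ℝ) = ‖matCLM J d‖ ^ 2 := by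
    rw [matCLM_mul, real_inner_comm, matCLM_adj, real_inner_self_eq_norm_sq]
  have hL : (inner ℝ d (matCLM (Lᵀ * L) d) : ℝ) = ‖matCLM L d‖ ^ 2 := by
    rw [matCLM_mul, real_inner_comm, matCLM_adj, real_inner_self_eq_norm_sq]
  have hq : ‖matCLM J d‖ ^ 2 + lam * ‖matCLM L d‖ ^ 2 = 0 := by
    rw [← hJ, ← hL, ← real_inner_smul_right, ← inner_add_right, ← matCLM_addsmul, h,
      inner_zero_right]
  have hJ0 : matCLM J d = 0 := by
    have : ‖matCLM J d‖ = 0 := by nlinarith [sq_nonneg ‖matCLM J d‖, sq_nonneg ‖matCLM L d‖, norm_nonneg (matCLM J d), norm_nonneg (matCLM L d)]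
    exact norm_eq_zero.mp this
  have hL0 : matCLM L d = 0 := by
    rw [hJ0] at hq
    simp only [norm_zero] at hq
    have h2 : ‖matCLM L d‖ ^ 2 = 0 := by
      rcases mul_eq_zero.mp (by linarith : lam * ‖matCLM L d‖ ^ 2 = 0) with h | h
      · exact absurd h hlam.ne'
      · exact h
    have := pow_eq_zero_iff (n := 2) (by norm_num) |>.mp h2
    exact norm_eq_zero.mp this
  have : d ∈ ({0} : Set (EuclideanSpace ℝ (Fin n))) := by
    rw [← hker]; exact ⟨hJ0, hL0⟩
  simpa using this

lemma key_isUnit {m n p : ℕ} (J : Matrix (Fin m) (Fin n) ℝ) (L : Matrix (Fin p) (Fin n) ℝ)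
    (hker : {v : EuclideanSpace ℝ (Fin n) | matCLM J v = 0} ∩
        {v : EuclideanSpace ℝ (Fin n) | matCLM L v = 0} = {0})
    (lam : ℝ) (hlam : 0 < lam) : IsUnit (Jᵀ * J + lam • (Lᵀ * L)) := by
  rw [← Matrix.mulVec_injective_iff_isUnit]
  intro x y hxy
  have h0 : (Jᵀ * J + lam • (Lᵀ * L)) *ᵥ (x - y) = 0 := by
    rw [Matrix.mulVec_sub, hxy, sub_self]
  have hd : matCLM (Jᵀ * J + lam • (Lᵀ * L)) ((WithLp.equiv 2 (Fin n → ℝ)).symm (x - y)) = 0 := by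
    rw [matCLM_zero_iff]
    simpa using h0
  have := key_posdef J L hker lam hlam _ hd
  have hxy0 : x - y = 0 := by
    have := congrArg (WithLp.equiv 2 (Fin n → ℝ)) this
    simpa using this
  exact sub_eq_zero.mp hxy0

lemma matCLM_mul_inv {m n p : ℕ} (J : Matrix (Fin m) (Fin n) ℝ) (L : Matrix (Fin p) (Fin n) ℝ)
    (hker : {v : EuclideanSpace ℝ (Fin n) | matCLM J v = 0} ∩
        {v : EuclideanSpace ℝ (Fin n) | matCLM L v = 0} = {0})
    (lam : ℝ) (hlam : 0 < lam) (z : EuclideanSpace ℝ (Fin n)) :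
    matCLM (Jᵀ * J + lam • (Lᵀ * L)) (matCLM (Jᵀ * J + lam • (Lᵀ * L))⁻¹ z) = z := by
  have hU := key_isUnit J L hker lam hlam
  have h1 : (Jᵀ * J + lam • (Lᵀ * L)) * (Jᵀ * J + lam • (Lᵀ * L))⁻¹ = 1 :=
    Matrix.mul_nonsing_inv _ ((Matrix.isUnit_iff_isUnit_det _).mp hU)
  rw [← matCLM_mul, h1]
  simp [matCLM, Matrix.toEuclideanLin_apply, Matrix.one_mulVec]


/-- under `N(J) ∩ N(L) = {0}` and `λ > 0`, every solution `d` of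
`(JᵀJ + λLᵀL) d = -JᵀF` satisfies `‖Jd‖ ≤ ‖F‖`; more generally, the matrix
`J(JᵀJ + λLᵀL)⁻¹Jᵀ` has spectral norm at most `1`. -/
theorem Jd_bound_and_projection_norm
    (m n p : ℕ) (J : Matrix (Fin m) (Fin n) ℝ) (L : Matrix (Fin p) (Fin n) ℝ)
    (hker : {v : EuclideanSpace ℝ (Fin n) | matCLM J v = 0} ∩
        {v : EuclideanSpace ℝ (Fin n) | matCLM L v = 0} = {0})
    (lam : ℝ) (hlam : 0 < lam) (F : EuclideanSpace ℝ (Fin m)) :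
    (∀ d : EuclideanSpace ℝ (Fin n),
        matCLM (Jᵀ * J + lam • (Lᵀ * L)) d = -(matCLM Jᵀ F) → ‖matCLM J d‖ ≤ ‖F‖) ∧
      ∀ w : EuclideanSpace ℝ (Fin m),
        ‖matCLM (J * (Jᵀ * J + lam • (Lᵀ * L))⁻¹ * Jᵀ) w‖ ≤ ‖w‖ := by
  constructor
  · intro d hd
    have h : matCLM (Jᵀ * J + lam • (Lᵀ * L)) d = matCLM Jᵀ (-F) := by
      rw [hd, map_neg]
    simpa using key_ineq J L lam hlam d (-F) h
  · intro w
    set d := matCLM (Jᵀ * J + lam • (Lᵀ * L))⁻¹ (matCLM Jᵀ w) with hdd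
    have h1 : matCLM (J * (Jᵀ * J + lam • (Lᵀ * L))⁻¹ * Jᵀ) w = matCLM J d := by
      rw [matCLM_mul, matCLM_mul]
    rw [h1]
    exact key_ineq J L lam hlam d w (matCLM_mul_inv J L hker lam hlam _)
end

section
/- Under the local assumptions, suppose x ∈ B(x*, δ) with F(x) ≠ 0, and let d be the LMMSS direction at x, i.e. the solution of (J(x)ᵀJ(x) + λ(x)LᵀL)d = −J(x)ᵀF(x) with λ(x) = ‖F(x)‖². Then ‖d‖ ≤ c₃·dist(x, X*), where c₃ = (1/(c₂√γ))·√(c₁² + c₂²(‖L‖² + c_F²)). -/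
open Matrix Metric

/-! Let `x̄` be a zero of `F` nearest to `x` and `v = x̄ - x`, so `‖v‖ = dist(x, X*)`. The direction
`d` satisfies the normal equation of `w ↦ ‖J w + F x‖² + λ ‖L w‖²`, hence minimises it; comparing
with the trial step `v` gives `λ ‖L d‖² ≤ c₁² ‖v‖⁴ + λ ‖L‖² ‖v‖²`, while testing the normal equation
against `d` gives `‖J d‖ ≤ ‖F x‖`. With `λ = ‖F x‖²` squeezed between `c₂² ‖v‖²` and `c_F² ‖v‖²`,
completeness `γ ‖d‖² ≤ ‖J d‖² + ‖L d‖²` then yields `c₂² γ ‖d‖² ≤ (c₁² + c₂² (‖L‖² + c_F²)) ‖v‖²`. -/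

open scoped RealInnerProductSpace

section MatrixMaps

variable {m n k : ℕ}

lemma inner_matCLM_transpose (A : Matrix (Fin m) (Fin n) ℝ) (u : EuclideanSpace ℝ (Fin m))
    (v : EuclideanSpace ℝ (Fin n)) : ⟪matCLM Aᵀ u, v⟫ = ⟪u, matCLM A v⟫ := by
  rw [← conjTranspose_eq_transpose_of_trivial]
  change ⟪toEuclideanLin Aᴴ u, v⟫ = ⟪u, toEuclideanLin A v⟫
  rw [toEuclideanLin_conjTranspose_eq_adjoint, LinearMap.adjoint_inner_left]

lemma matCLM_mul_apply (A : Matrix (Fin m) (Fin k) ℝ) (B : Matrix (Fin k) (Fin n) ℝ)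
    (v : EuclideanSpace ℝ (Fin n)) : matCLM (A * B) v = matCLM A (matCLM B v) := by
  simp [matCLM]

lemma matCLM_add_smul_apply (A B : Matrix (Fin m) (Fin n) ℝ) (c : ℝ)
    (v : EuclideanSpace ℝ (Fin n)) : matCLM (A + c • B) v = matCLM A v + c • matCLM B v := by
  simp [matCLM]

lemma inner_add_mul_inner_eq_zero_of_normal_eq {p : ℕ} {A : Matrix (Fin m) (Fin n) ℝ}
    {B : Matrix (Fin p) (Fin n) ℝ} {μ : ℝ} {f : EuclideanSpace ℝ (Fin m)}
    {d : EuclideanSpace ℝ (Fin n)} (hd : matCLM (Aᵀ * A + μ • (Bᵀ * B)) d = -(matCLM Aᵀ f))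
    (w : EuclideanSpace ℝ (Fin n)) :
    ⟪matCLM A w, matCLM A d + f⟫ + μ * ⟪matCLM B w, matCLM B d⟫ = 0 := by
  have h : ⟪matCLM (Aᵀ * A + μ • (Bᵀ * B)) d + matCLM Aᵀ f, w⟫ = 0 := by
    rw [hd, neg_add_cancel, inner_zero_left]
  rwa [matCLM_add_smul_apply, matCLM_mul_apply, matCLM_mul_apply, add_right_comm, ← map_add,
    inner_add_left, real_inner_smul_left, inner_matCLM_transpose, inner_matCLM_transpose,
    real_inner_comm (matCLM A w), real_inner_comm (matCLM B w)] at h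

end MatrixMaps

section Stationary

variable {E F G : Type*} [NormedAddCommGroup E] [InnerProductSpace ℝ E]
  [NormedAddCommGroup F] [InnerProductSpace ℝ F] [NormedAddCommGroup G] [InnerProductSpace ℝ G]
  {A : E →L[ℝ] F} {B : E →L[ℝ] G} {f : F} {μ : ℝ} {d : E}

lemma norm_apply_le_of_stationary (hμ : 0 ≤ μ)
    (hd : ∀ w, ⟪A w, A d + f⟫ + μ * ⟪B w, B d⟫ = 0) : ‖A d‖ ≤ ‖f‖ := by
  have h := hd d
  rw [inner_add_right, real_inner_self_eq_norm_sq, real_inner_self_eq_norm_sq] at h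
  have hcs := neg_le_of_abs_le (abs_real_inner_le_norm (A d) f)
  have hsq : ‖A d‖ ^ 2 ≤ ‖A d‖ * ‖f‖ := by nlinarith [sq_nonneg ‖B d‖]
  nlinarith [norm_nonneg (A d), norm_nonneg f]

lemma objective_le_of_stationary (hμ : 0 ≤ μ)
    (hd : ∀ w, ⟪A w, A d + f⟫ + μ * ⟪B w, B d⟫ = 0) (v : E) :
    ‖A d + f‖ ^ 2 + μ * ‖B d‖ ^ 2 ≤ ‖A v + f‖ ^ 2 + μ * ‖B v‖ ^ 2 := by
  have hA : A v + f = A (v - d) + (A d + f) := by rw [map_sub]; abel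
  have hB : B v = B (v - d) + B d := by rw [map_sub]; abel
  rw [hA, hB, norm_add_sq_real (A (v - d)), norm_add_sq_real (B (v - d))]
  nlinarith [hd (v - d), sq_nonneg ‖A (v - d)‖, mul_nonneg hμ (sq_nonneg ‖B (v - d)‖)]

lemma mul_sq_norm_le_of_stationary (hμ : 0 ≤ μ)
    (hd : ∀ w, ⟪A w, A d + f⟫ + μ * ⟪B w, B d⟫ = 0) {γ : ℝ}
    (hγ : γ * ‖d‖ ^ 2 ≤ ‖A d‖ ^ 2 + ‖B d‖ ^ 2) (v : E) :
    μ * (γ * ‖d‖ ^ 2) ≤ μ * ‖f‖ ^ 2 + ‖A v + f‖ ^ 2 + μ * ‖B v‖ ^ 2 := by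
  have hAd : ‖A d‖ ^ 2 ≤ ‖f‖ ^ 2 :=
    pow_le_pow_left₀ (norm_nonneg _) (norm_apply_le_of_stationary hμ hd) 2
  nlinarith [objective_le_of_stationary hμ hd v, mul_le_mul_of_nonneg_left hγ hμ,
    mul_le_mul_of_nonneg_left hAd hμ, sq_nonneg ‖A d + f‖]

end Stationary

lemma mem_closedBall_two_mul_of_infDist_eq_dist {α : Type*} [PseudoMetricSpace α] {S : Set α}
    {x x₀ y : α} {δ : ℝ} (hx : x ∈ closedBall x₀ δ) (hx₀ : x₀ ∈ S)
    (hy : infDist x S = dist x y) : y ∈ closedBall x₀ (2 * δ) := by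
  rw [mem_closedBall] at hx ⊢
  calc dist y x₀ ≤ dist x y + dist x x₀ := dist_triangle_left _ _ _
    _ ≤ 2 * δ := by linarith [hy ▸ infDist_le_dist_of_mem hx₀ (x := x)]

lemma sq_mul_le_of_trial_bounds {γ c₁ c₂ c_F ℓ t D s a b : ℝ} (hc₂ : 0 < c₂) (ht : 0 < t)
    (hD : 0 ≤ D) (ha : 0 ≤ a) (hb : 0 ≤ b) (hlow : c₂ * D ≤ t) (hup : t ≤ c_F * D)
    (ha' : a ≤ c₁ * D ^ 2) (hb' : b ≤ ℓ * D)
    (h : t ^ 2 * (γ * s ^ 2) ≤ t ^ 2 * t ^ 2 + a ^ 2 + t ^ 2 * b ^ 2) :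
    c₂ ^ 2 * γ * s ^ 2 ≤ (c₁ ^ 2 + c₂ ^ 2 * (ℓ ^ 2 + c_F ^ 2)) * D ^ 2 := by
  have ht2 : t ^ 2 ≤ (c_F * D) ^ 2 := pow_le_pow_left₀ ht.le hup 2
  have hD2 : (c₂ * D) ^ 2 ≤ t ^ 2 := pow_le_pow_left₀ (by positivity) hlow 2
  have ha2 : a ^ 2 ≤ (c₁ * D ^ 2) ^ 2 := pow_le_pow_left₀ ha ha' 2
  have hb2 : b ^ 2 ≤ (ℓ * D) ^ 2 := pow_le_pow_left₀ hb hb' 2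
  have hc₂a : c₂ ^ 2 * a ^ 2 ≤ t ^ 2 * (c₁ ^ 2 * D ^ 2) := by
    nlinarith [mul_le_mul_of_nonneg_left hD2 (sq_nonneg (c₁ * D))]
  refine le_of_mul_le_mul_left ?_ (pow_pos ht 2)
  nlinarith [mul_le_mul_of_nonneg_left h (sq_nonneg c₂),
    mul_le_mul_of_nonneg_left ht2 (mul_nonneg (sq_nonneg c₂) (sq_nonneg t)),
    mul_le_mul_of_nonneg_left hb2 (mul_nonneg (sq_nonneg c₂) (sq_nonneg t))]

lemma le_div_mul_sqrt_mul_of_sq_le {γ c K s D : ℝ} (hγ : 0 < γ) (hc : 0 < c) (hK : 0 ≤ K)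
    (hD : 0 ≤ D) (h : c ^ 2 * γ * s ^ 2 ≤ K * D ^ 2) :
    s ≤ 1 / (c * Real.sqrt γ) * Real.sqrt K * D := by
  have hpos : 0 < c * Real.sqrt γ := by positivity
  rw [mul_assoc, one_div_mul_eq_div, le_div_iff₀ hpos]
  apply le_of_sq_le_sq _ (by positivity)
  rw [mul_pow, mul_pow, mul_pow, Real.sq_sqrt hγ.le, Real.sq_sqrt hK]
  linarith

theorem lmmss_direction_bound_general
    (n m p : ℕ)
    (F : EuclideanSpace ℝ (Fin n) → EuclideanSpace ℝ (Fin m))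
    (J : EuclideanSpace ℝ (Fin n) → Matrix (Fin m) (Fin n) ℝ)
    (hdiff : ∀ x, HasFDerivAt F (matCLM (J x)) x)
    (xstar : EuclideanSpace ℝ (Fin n)) (hxstar : F xstar = 0)
    (δ : ℝ)
    (c1 : ℝ)
    (hc1 : ∀ x ∈ closedBall xstar (2 * δ), ∀ y ∈ closedBall xstar (2 * δ),
      ‖matCLM (J y) (x - y) - (F x - F y)‖ ≤ c1 * ‖x - y‖ ^ 2)
    (cF : ℝ)
    (hcF : ∀ x ∈ closedBall xstar (2 * δ), ∀ y ∈ closedBall xstar (2 * δ),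
      ‖F x - F y‖ ≤ cF * ‖x - y‖)
    (c2 : ℝ) (hc2pos : 0 < c2)
    (hc2 : ∀ x ∈ closedBall xstar (2 * δ),
      c2 * infDist x {y | F y = 0} ≤ ‖F x‖)
    (L : Matrix (Fin p) (Fin n) ℝ) (γ : ℝ) (hγ : 0 < γ)
    (hcomp : ∀ (x : EuclideanSpace ℝ (Fin n)) (v : EuclideanSpace ℝ (Fin n)),
      ‖matCLM (J x) v‖ ^ 2 + ‖matCLM L v‖ ^ 2 ≥ γ * ‖v‖ ^ 2)
    (x : EuclideanSpace ℝ (Fin n)) (hx : x ∈ closedBall xstar δ) (hFx : F x ≠ 0)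
    (d : EuclideanSpace ℝ (Fin n))
    (hd : matCLM ((J x)ᵀ * J x + ‖F x‖ ^ 2 • (Lᵀ * L)) d = -(matCLM (J x)ᵀ (F x))) :
    ‖d‖ ≤ (1 / (c2 * Real.sqrt γ)) * Real.sqrt (c1 ^ 2 + c2 ^ 2 * (‖matCLM L‖ ^ 2 + cF ^ 2)) *
      infDist x {y | F y = 0} := by
  have hclosed : IsClosed {y | F y = 0} :=
    isClosed_eq (continuous_iff_continuousAt.2 fun z ↦ (hdiff z).continuousAt) continuous_const
  obtain ⟨x₀, hx₀, hdist⟩ := hclosed.exists_infDist_eq_dist ⟨xstar, hxstar⟩ x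
  have hx₀F : F x₀ = 0 := hx₀
  have hx2 : x ∈ closedBall xstar (2 * δ) :=
    closedBall_subset_closedBall (by linarith [dist_nonneg.trans (mem_closedBall.1 hx)]) hx
  have hx₀2 := mem_closedBall_two_mul_of_infDist_eq_dist hx hxstar hdist
  have hstep : ‖x₀ - x‖ = infDist x {y | F y = 0} := by rw [hdist, dist_comm, dist_eq_norm]
  have hJ : ‖matCLM (J x) (x₀ - x) + F x‖ ≤ c1 * ‖x₀ - x‖ ^ 2 := by
    simpa [hx₀F] using hc1 x₀ hx₀2 x hx2
  have hF : ‖F x‖ ≤ cF * ‖x₀ - x‖ := by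
    simpa [hx₀F, norm_sub_rev] using hcF x hx2 x₀ hx₀2
  have hmin := mul_sq_norm_le_of_stationary (sq_nonneg ‖F x‖)
    (inner_add_mul_inner_eq_zero_of_normal_eq hd) (hcomp x d) (x₀ - x)
  have hlow : c2 * ‖x₀ - x‖ ≤ ‖F x‖ := hstep ▸ hc2 x hx2
  rw [← hstep]
  refine le_div_mul_sqrt_mul_of_sq_le hγ hc2pos (by positivity) (norm_nonneg _) ?_
  exact sq_mul_le_of_trial_bounds hc2pos (norm_pos_iff.2 hFx) (norm_nonneg _) (norm_nonneg _)
    (norm_nonneg _) hlow hF hJ ((matCLM L).le_opNorm _) hmin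

/-- under the local assumptions, if `x ∈ B(x*, δ)` with `F(x) ≠ 0` and `d` is the
LMMSS direction at `x` (with `λ(x) = ‖F(x)‖²`), then `‖d‖ ≤ c₃ · dist(x, X*)` with
`c₃ = (1/(c₂√γ))·√(c₁² + c₂²(‖L‖² + c_F²))`. -/
theorem lmmss_direction_bound
    (n m p : ℕ)
    (F : EuclideanSpace ℝ (Fin n) → EuclideanSpace ℝ (Fin m))
    (J : EuclideanSpace ℝ (Fin n) → Matrix (Fin m) (Fin n) ℝ)
    (hdiff : ∀ x, HasFDerivAt F (matCLM (J x)) x)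
    (hJcont : Continuous J)
    (hne : ∃ x, F x = 0)
    (xstar : EuclideanSpace ℝ (Fin n)) (hxstar : F xstar = 0)
    (δ : ℝ) (hδ0 : 0 < δ) (hδh : δ < 1 / 2)
    (c1 : ℝ) (hc1pos : 0 < c1)
    (hc1 : ∀ x ∈ closedBall xstar (2 * δ), ∀ y ∈ closedBall xstar (2 * δ),
      ‖matCLM (J y) (x - y) - (F x - F y)‖ ≤ c1 * ‖x - y‖ ^ 2)
    (cF : ℝ) (hcFpos : 0 < cF)
    (hcF : ∀ x ∈ closedBall xstar (2 * δ), ∀ y ∈ closedBall xstar (2 * δ),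
      ‖F x - F y‖ ≤ cF * ‖x - y‖)
    (c2 : ℝ) (hc2pos : 0 < c2)
    (hc2 : ∀ x ∈ closedBall xstar (2 * δ),
      c2 * infDist x {y | F y = 0} ≤ ‖F x‖)
    (L : Matrix (Fin p) (Fin n) ℝ) (γ : ℝ) (hγ : 0 < γ)
    (hcomp : ∀ (x : EuclideanSpace ℝ (Fin n)) (v : EuclideanSpace ℝ (Fin n)),
      ‖matCLM (J x) v‖ ^ 2 + ‖matCLM L v‖ ^ 2 ≥ γ * ‖v‖ ^ 2)
    (x : EuclideanSpace ℝ (Fin n)) (hx : x ∈ closedBall xstar δ) (hFx : F x ≠ 0)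
    (d : EuclideanSpace ℝ (Fin n))
    (hd : matCLM ((J x)ᵀ * J x + ‖F x‖ ^ 2 • (Lᵀ * L)) d = -(matCLM (J x)ᵀ (F x))) :
    ‖d‖ ≤ (1 / (c2 * Real.sqrt γ)) * Real.sqrt (c1 ^ 2 + c2 ^ 2 * (‖matCLM L‖ ^ 2 + cF ^ 2)) *
      infDist x {y | F y = 0} :=
  lmmss_direction_bound_general n m p F J hdiff xstar hxstar δ c1 hc1 cF hcF c2 hc2pos hc2 L γ hγ
    hcomp x hx hFx d hd
end
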